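/- arXiv:1703.07697 — 2 statements merged into one kernel-verified Lean document; each statement's English description precedes it below -/
import Mathlib

section
/- Let Ā ∈ ℝ^{s×s} be similar via an invertible real matrix Q to the block matrix [[0, D],[-D^T, 0]] where D ∈ ℝ^{m×(s-m)} is diagonal with diagonal entries σ_1,...,σ_{s-m} ≥ 0 and m = ⌈s/2⌉. Then for any J ∈ ℝ^{d×d} and h ∈ ℝ, the matrix I_{sd} - h(Ā ⊗ J) is invertible if and only if all the matrices I_d + h²σ_i²J², i = 1,...,s-m, are invertible. -/
/-!
Conjugating by `Q ⊗ I` replaces `Ā` by the block matrix `[[0, D], [-Dᵀ, 0]]`. Grouping the indices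
blockwise, `I - h (B ⊗ J)` becomes `[[I, -h (D ⊗ J)], [h (Dᵀ ⊗ J), I]]`, whose Schur complement is
`I + h² (DᵀD ⊗ J²)`. Since `DᵀD = diag(σᵢ²)`, this is block diagonal with the blocks
`I + h²σᵢ² J²`, so its determinant is their product.
-/

open Matrix Kronecker

namespace Matrix

variable {R : Type*} [CommRing R] {l n p : Type*}
  [Fintype l] [DecidableEq l] [Fintype n] [DecidableEq n] [Fintype p] [DecidableEq p]

theorem det_one_sub_smul_conj_kronecker {Q : Matrix n n R} (hQ : IsUnit Q) (A : Matrix n n R)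
    (J : Matrix p p R) (h : R) :
    det (1 - h • ((Q⁻¹ * A * Q) ⊗ₖ J)) = det (1 - h • (A ⊗ₖ J)) := by
  have hQJ : IsUnit (Q ⊗ₖ (1 : Matrix p p R)) := by
    rw [isUnit_iff_isUnit_det, det_kronecker, det_one, one_pow, mul_one]
    exact ((isUnit_iff_isUnit_det Q).mp hQ).pow _
  have hconj : (Q⁻¹ * A * Q) ⊗ₖ J = (Q ⊗ₖ 1)⁻¹ * (A ⊗ₖ J) * (Q ⊗ₖ 1) := by
    rw [inv_kronecker, inv_one, ← mul_kronecker_mul, ← mul_kronecker_mul, one_mul, mul_one]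
  rw [hconj, ← det_conj' hQJ (1 - h • (A ⊗ₖ J)), mul_sub, sub_mul, mul_one,
    nonsing_inv_mul _ ((isUnit_iff_isUnit_det _).mp hQJ), mul_smul_comm, smul_mul_assoc]

theorem det_one_sub_smul_reindex_kronecker (e : l ≃ n) (A : Matrix l l R) (J : Matrix p p R)
    (h : R) : det (1 - h • (reindex e e A ⊗ₖ J)) = det (1 - h • (A ⊗ₖ J)) := by
  rw [kroneckerMap_reindex_left]
  set ε := e.prodCongr (Equiv.refl p)
  have hreindex : 1 - h • reindex ε ε (A ⊗ₖ J) = reindex ε ε (1 - h • (A ⊗ₖ J)) := by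
    ext; simp [one_apply]
  rw [hreindex, det_reindex_self]

theorem det_one_sub_smul_fromBlocks_zero_neg_kronecker (B : Matrix l n R) (C : Matrix n l R)
    (J : Matrix p p R) (h : R) :
    det (1 - h • (fromBlocks 0 B (-C) 0 ⊗ₖ J)) = det (1 + h ^ 2 • ((C * B) ⊗ₖ (J * J))) := by
  have hblocks : (1 - h • (fromBlocks 0 B (-C) 0 ⊗ₖ J)).submatrix
      (Equiv.sumProdDistrib l n p).symm (Equiv.sumProdDistrib l n p).symm =
      fromBlocks 1 (-(h • (B ⊗ₖ J))) (h • (C ⊗ₖ J)) 1 := by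
    ext (⟨a, i⟩ | ⟨a, i⟩) (⟨b, j⟩ | ⟨b, j⟩) <;> simp [one_apply]
  rw [← det_submatrix_equiv_self (Equiv.sumProdDistrib l n p).symm, hblocks,
    det_fromBlocks_one₁₁, Matrix.mul_neg, sub_neg_eq_add, Matrix.smul_mul, Matrix.mul_smul,
    smul_smul, ← sq, mul_kronecker_mul]

theorem det_one_add_smul_diagonal_kronecker (c : R) (v : n → R) (K : Matrix p p R) :
    det (1 + c • (diagonal v ⊗ₖ K)) = ∏ i, det (1 + (c * v i) • K) := by
  rw [diagonal_kronecker, ← det_blockDiagonal, ← det_reindex_self (Equiv.prodComm _ _)]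
  congr 1
  ext ⟨i, a⟩ ⟨j, b⟩
  simp only [reindex_apply, Equiv.prodComm_symm, Equiv.coe_prodComm, submatrix_apply,
    Prod.swap_prod_mk, add_apply, one_apply, Prod.mk.injEq, smul_apply, blockDiagonal_apply,
    smul_eq_mul]
  split_ifs <;> simp_all [mul_assoc]

theorem transpose_mul_self_eq_diagonal {m n : ℕ} (hnm : n ≤ m) (σ : Fin n → R)
    (D : Matrix (Fin m) (Fin n) R) (hD : ∀ i j, D i j = if (i : ℕ) = (j : ℕ) then σ j else 0) :
    Dᵀ * D = diagonal fun j => σ j ^ 2 := by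
  have hD' : ∀ i j, D i j = if i = Fin.castLE hnm j then σ j else 0 := fun i j => by
    simp [hD, Fin.ext_iff]
  ext i j
  simp only [transpose_apply, mul_apply, hD', diagonal_apply]
  by_cases hij : i = j
  · subst hij
    simp [sq]
  · simp [hij, Ne.symm hij]

end Matrix

theorem invertibility_via_block_diagonalization (s m d : ℕ) (hm : m = (s + 1) / 2)
    (Abar : Matrix (Fin s) (Fin s) ℝ)
    (σ : Fin (s - m) → ℝ)
    (D : Matrix (Fin m) (Fin (s - m)) ℝ)
    (hD : ∀ i j, D i j = if (i : ℕ) = (j : ℕ) then σ j else 0)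
    (Q : Matrix (Fin s) (Fin s) ℝ) (hQ : IsUnit Q)
    (hsim : Q⁻¹ * Abar * Q =
      Matrix.reindex (finSumFinEquiv.trans (finCongr (by omega)))
        (finSumFinEquiv.trans (finCongr (by omega)))
        (Matrix.fromBlocks 0 D (-Dᵀ) 0))
    (J : Matrix (Fin d) (Fin d) ℝ) (h : ℝ) :
    IsUnit ((1 : Matrix (Fin s × Fin d) (Fin s × Fin d) ℝ) - h • (Abar ⊗ₖ J)) ↔
      ∀ i : Fin (s - m),
        IsUnit ((1 : Matrix (Fin d) (Fin d) ℝ) + (h ^ 2 * σ i ^ 2) • (J * J)) := by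
  have hDD : Dᵀ * D = diagonal fun i => σ i ^ 2 :=
    transpose_mul_self_eq_diagonal (by omega) σ D hD
  rw [isUnit_iff_isUnit_det, ← det_one_sub_smul_conj_kronecker hQ, hsim,
    det_one_sub_smul_reindex_kronecker, det_one_sub_smul_fromBlocks_zero_neg_kronecker, hDD,
    det_one_add_smul_diagonal_kronecker, IsUnit.prod_univ_iff]
  simp only [isUnit_iff_isUnit_det]
end

section
/- Let b_i, a_{ij} (1 ≤ i,j ≤ s) satisfy the symplecticity condition b_i a_{ij} + b_j a_{ji} = b_i b_j. Then for any differentiable curve satisfying the IRK equations applied to a system ẏ = f(y) with a quadratic invariant Q(y) = y^T G y (G symmetric, with ∇Q(y)·f(y) = 0 for all y), the numerical update y₁ = y₀ + h Σ_i b_i f(Y_i), Y_i = y₀ + h Σ_j a_{ij} f(Y_j), satisfies Q(y₁) = Q(y₀). -/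
/-!
Let `B` be the symmetric bilinear form of `G`, `F i = f (Y i)`, `C i j = B (F i) (F j)` and
`W = ∑ i, b i • F i`, so that `y₁ = y₀ + h W` and `B y₁ y₁ = B y₀ y₀ + 2h B y₀ W + h² B W W`.
Invariance gives `B (Y i) (F i) = 0`, so the stage equation turns `B y₀ (F i)` into
`-h ∑ j, a i j C j i`. The change of `B` is therefore
`h² ∑ i j, (b i b j - b i a i j - b j a j i) C i j`, which symplecticity kills term by term.
-/

open Matrix

theorem Finset.sum_sum_mul_mul_eq_two_mul_of_symplectic {R ι : Type*} [CommRing R] [Fintype ι]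
    (a : ι → ι → R) (b : ι → R) (hsympl : ∀ i j, b i * a i j + b j * a j i = b i * b j)
    (C : ι → ι → R) (hC : ∀ i j, C i j = C j i) :
    ∑ i, ∑ j, b i * b j * C i j = 2 * ∑ i, ∑ j, b i * a i j * C j i := by
  have hswap : ∑ i, ∑ j, b i * a i j * C j i = ∑ i, ∑ j, b j * a j i * C i j :=
    Finset.sum_comm
  calc ∑ i, ∑ j, b i * b j * C i j
      = ∑ i, ∑ j, (b i * a i j * C j i + b j * a j i * C i j) := by
        refine Finset.sum_congr rfl fun i _ ↦ Finset.sum_congr rfl fun j _ ↦ ?_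
        rw [← hsympl i j, hC j i]
        ring
    _ = 2 * ∑ i, ∑ j, b i * a i j * C j i := by
        simp only [Finset.sum_add_distrib, ← hswap]
        ring

namespace LinearMap.BilinForm

variable {R M ι : Type*} [CommRing R] [AddCommGroup M] [Module R M] [Fintype ι]
  {B : LinearMap.BilinForm R M}

theorem IsSymm.apply_add_smul_self (hB : B.IsSymm) (u w : M) (h : R) :
    B (u + h • w) (u + h • w) = B u u + 2 * h * B u w + h ^ 2 * B w w := by
  simp only [add_left, add_right, smul_left, smul_right, hB.eq w u]
  ring

theorem smul_sum_left (c : ι → R) (F : ι → M) (v : M) :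
    B (∑ i, c i • F i) v = ∑ i, c i * B (F i) v := by
  simp only [map_sum, LinearMap.sum_apply, smul_left]

theorem smul_sum_right (c : ι → R) (F : ι → M) (u : M) :
    B u (∑ i, c i • F i) = ∑ i, c i * B u (F i) := by
  simp only [map_sum, smul_right]

theorem apply_left_eq_of_eq_add_smul_sum (a : ι → R) (F : ι → M) (h : R) (y₀ Y v : M)
    (hY : Y = y₀ + h • ∑ j, a j • F j) (hYv : B Y v = 0) :
    B y₀ v = -h * ∑ j, a j * B (F j) v := by
  rw [hY, add_left, smul_left, smul_sum_left] at hYv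
  linear_combination hYv

theorem IsSymm.apply_self_symplectic_rk_step (hB : B.IsSymm) (a : ι → ι → R) (b : ι → R)
    (hsympl : ∀ i j, b i * a i j + b j * a j i = b i * b j) (F : ι → M) (h : R) (y₀ : M)
    (Y : ι → M) (hstage : ∀ i, Y i = y₀ + h • ∑ j, a i j • F j)
    (hortho : ∀ i, B (Y i) (F i) = 0) :
    B (y₀ + h • ∑ i, b i • F i) (y₀ + h • ∑ i, b i • F i) = B y₀ y₀ := by
  have hcross : B y₀ (∑ i, b i • F i) = -h * ∑ i, ∑ j, b i * a i j * B (F j) (F i) := by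
    simp only [smul_sum_right, Finset.mul_sum,
      fun i ↦ apply_left_eq_of_eq_add_smul_sum _ F h y₀ _ _ (hstage i) (hortho i)]
    exact Finset.sum_congr rfl fun i _ ↦ Finset.sum_congr rfl fun j _ ↦ by ring
  have hsquare : B (∑ i, b i • F i) (∑ i, b i • F i) = ∑ i, ∑ j, b i * b j * B (F i) (F j) := by
    rw [smul_sum_left]
    simp only [smul_sum_right, Finset.mul_sum, mul_assoc]
  rw [hB.apply_add_smul_self, hcross, hsquare,
    Finset.sum_sum_mul_mul_eq_two_mul_of_symplectic a b hsympl _ fun i j ↦ hB.eq _ _]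
  ring

end LinearMap.BilinForm

theorem symplectic_IRK_preserves_quadratic_invariant (s d : ℕ)
    (a : Fin s → Fin s → ℝ) (b : Fin s → ℝ)
    (hsympl : ∀ i j, b i * a i j + b j * a j i = b i * b j)
    (G : Matrix (Fin d) (Fin d) ℝ) (hG : Gᵀ = G)
    (f : (Fin d → ℝ) → (Fin d → ℝ))
    (hinv : ∀ y : Fin d → ℝ, y ⬝ᵥ G.mulVec (f y) + (f y) ⬝ᵥ G.mulVec y = 0)
    (h : ℝ) (y₀ y₁ : Fin d → ℝ) (Y : Fin s → Fin d → ℝ)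
    (hstage : ∀ i, Y i = y₀ + h • ∑ j, a i j • f (Y j))
    (hupd : y₁ = y₀ + h • ∑ i, b i • f (Y i)) :
    y₁ ⬝ᵥ G.mulVec y₁ = y₀ ⬝ᵥ G.mulVec y₀ := by
  have hB : (toBilin' G).IsSymm := isSymm_toBilin'_iff_isSymm.2 hG
  have hortho : ∀ y, toBilin' G y (f y) = 0 := fun y ↦ by
    have hy := hinv y
    rw [← toBilin'_apply', ← toBilin'_apply', hB.eq (f y)] at hy
    linarith
  have hstep := hB.apply_self_symplectic_rk_step a b hsympl (fun i ↦ f (Y i)) h y₀ Y hstage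
    fun i ↦ hortho (Y i)
  rwa [← hupd, toBilin'_apply', toBilin'_apply'] at hstep
end
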